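/- Let R be a commutative Noetherian ring, x_1,...,x_d a regular R-sequence in the Jacobson radical of R with (x_1,...,x_d)R prime, and let I be a squarefree monomial ideal. Then for each k ≥ 1, I^{(k)} = I^k if and only if Ass_R(R/I^k) ⊆ Ass_R(R/I). -/

import Mathlib

/-!
Because the `x i` form a regular sequence in the Jacobson radical, every permutation of it is
again regular. Hence for every `S ⊆ {1, …, d}` the elements `x j`, `j ∉ S`, form a regular sequence
modulo `P_S = (x i : i ∈ S)` that generates the prime ideal `(x) / P_S`. Primality lifts along
such a sequence one element at a time (if `a ∈ Jac(R)` is a nonzerodivisor of a Noetherian ring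
with `R/(a)` a domain, then `R` is a domain, by Krull's intersection theorem), so every `P_S` is
prime, and `x j ∉ P_S` for `j ∉ S`.

These two facts are all the monomial combinatorics needs: a squarefree monomial ideal `I` is
the intersection of the `P_F` over the minimal vertex covers `F` of its supports, so
`Ass(R/I) = Min(I)`. The theorem then reduces to a general fact about a Noetherian ring: the
saturation of `I^k` with respect to the minimal primes of `I` equals `I^k` if and only if every
associated prime of `I^k` is minimal over `I` (one direction by prime avoidance).
-/

open Ideal RingTheory.Sequence

section Primality

variable {R : Type*} [CommRing R]

theorem exists_eq_pow_mul_notMem_span_singleton [IsNoetherianRing R] {a y : R}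
    (ha : a ∈ jacobson (⊥ : Ideal R)) (hy : y ≠ 0) :
    ∃ (m : ℕ) (z : R), y = a ^ m * z ∧ z ∉ span {a} := by
  by_contra! h
  have hpow : ∀ n : ℕ, y ∈ span {a} ^ n := by
    intro n
    induction n with
    | zero => simp
    | succ n ih =>
      obtain ⟨z, rfl⟩ := mem_span_singleton.mp (span_singleton_pow a n ▸ ih)
      obtain ⟨w, rfl⟩ := mem_span_singleton.mp (h n z rfl)
      rw [span_singleton_pow, mem_span_singleton]
      exact ⟨w, by ring⟩
  have hkrull := iInf_pow_smul_eq_bot_of_le_jacobson (M := R) (span {a})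
    ((span_singleton_le_iff_mem _).mpr ha)
  simp only [smul_eq_mul, mul_top] at hkrull
  exact hy (by simpa [hkrull] using Submodule.mem_iInf _ |>.mpr hpow)

theorem isPrime_bot_of_isPrime_span_singleton [IsNoetherianRing R] {a : R}
    (ha : a ∈ jacobson (⊥ : Ideal R)) (hreg : IsSMulRegular R a)
    (hp : (span {a} : Ideal R).IsPrime) : (⊥ : Ideal R).IsPrime := by
  refine ⟨fun h => hp.ne_top (eq_top_iff.mpr (h ▸ bot_le)), fun {u v} huv => ?_⟩
  by_contra! hne
  obtain ⟨m, u', rfl, hu'⟩ := exists_eq_pow_mul_notMem_span_singleton ha hne.1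
  obtain ⟨l, v', rfl, hv'⟩ := exists_eq_pow_mul_notMem_span_singleton ha hne.2
  have huv' : u' * v' = 0 := (hreg.pow (m + l)).right_eq_zero_of_smul <| by
    rw [Submodule.mem_bot] at huv
    rw [smul_eq_mul, ← huv]
    ring
  rcases hp.mem_or_mem (huv' ▸ zero_mem _ : u' * v' ∈ span {a}) with h | h
  exacts [hu' h, hv' h]

theorem Ideal.Quotient.mk_mem_jacobson_bot {J : Ideal R} {a : R}
    (ha : a ∈ jacobson (⊥ : Ideal R)) : Ideal.Quotient.mk J a ∈ jacobson (⊥ : Ideal (R ⧸ J)) := by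
  rw [mem_jacobson_bot] at ha ⊢
  intro y
  obtain ⟨z, rfl⟩ := Ideal.Quotient.mk_surjective y
  simpa using (ha z).map (Ideal.Quotient.mk J)

theorem isPrime_of_isPrime_sup_span_singleton [IsNoetherianRing R] {J : Ideal R} {a : R}
    (ha : a ∈ jacobson (⊥ : Ideal R)) (hreg : IsSMulRegular (R ⧸ J) a)
    (hp : (J ⊔ span {a}).IsPrime) : J.IsPrime := by
  have hmap : (J ⊔ span {a}).map (Ideal.Quotient.mk J) = span {Ideal.Quotient.mk J a} := by
    rw [Ideal.map_sup, map_quotient_self, bot_sup_eq, map_span, Set.image_singleton]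
  have hbot : (⊥ : Ideal (R ⧸ J)).IsPrime := by
    refine isPrime_bot_of_isPrime_span_singleton (Ideal.Quotient.mk_mem_jacobson_bot ha)
      ((isSMulRegular_algebraMap_iff (R ⧸ J)).mpr hreg) ?_
    rw [← hmap]
    exact map_isPrime_of_surjective Ideal.Quotient.mk_surjective (by rw [mk_ker]; exact le_sup_left)
  simpa [← RingHom.ker_eq_comap_bot] using hbot.comap (Ideal.Quotient.mk J)

theorem eq_top_of_isSMulRegular_quotient_of_mem {J : Ideal R} {a : R}
    (hreg : IsSMulRegular (R ⧸ J) a) (ha : a ∈ J) : J = ⊤ := by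
  have h1 : Ideal.Quotient.mk J 1 = 0 := hreg.right_eq_zero_of_smul <| by
    rw [Algebra.smul_def, Ideal.Quotient.algebraMap_eq, ← map_mul, mul_one,
      Ideal.Quotient.eq_zero_iff_mem]
    exact ha
  rwa [Ideal.Quotient.eq_zero_iff_mem, ← eq_top_iff_one] at h1

end Primality

section RegularSequence

variable {R : Type*} [CommRing R]

theorem isSMulRegular_quotient_ofList {rs₁ rs₂ : List R} {a : R}
    (h : IsWeaklyRegular R (rs₁ ++ a :: rs₂)) : IsSMulRegular (R ⧸ ofList rs₁) a := by
  have h' := ((isWeaklyRegular_append_iff R rs₁ (a :: rs₂)).mp h).2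
  rw [smul_eq_mul, mul_top, isWeaklyRegular_cons_iff] at h'
  exact h'.1

theorem isPrime_ofList_of_isWeaklyRegular_append [IsNoetherianRing R] {rs₁ rs₂ : List R}
    (h : IsWeaklyRegular R (rs₁ ++ rs₂)) (hjac : ∀ r ∈ rs₂, r ∈ jacobson (⊥ : Ideal R))
    (hp : (ofList (rs₁ ++ rs₂)).IsPrime) : (ofList rs₁).IsPrime := by
  induction rs₂ generalizing rs₁ with
  | nil => simpa using hp
  | cons a rs₂ ih =>
    have hcons : rs₁ ++ a :: rs₂ = rs₁ ++ [a] ++ rs₂ := by simp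
    have hpa := ih (rs₁ := rs₁ ++ [a]) (hcons ▸ h)
      (fun r hr => hjac r (List.mem_cons_of_mem a hr)) (hcons ▸ hp)
    rw [ofList_append, ofList_singleton] at hpa
    exact isPrime_of_isPrime_sup_span_singleton (hjac a List.mem_cons_self)
      (isSMulRegular_quotient_ofList h) hpa

theorem notMem_ofList_of_isWeaklyRegular_append {rs₁ rs₂ : List R}
    (h : IsWeaklyRegular R (rs₁ ++ rs₂)) (hne : ofList (rs₁ ++ rs₂) ≠ ⊤) {r : R}
    (hr : r ∈ rs₂) : r ∉ ofList rs₁ := by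
  induction rs₂ generalizing rs₁ with
  | nil => simp at hr
  | cons a rs₂ ih =>
    have hcons : rs₁ ++ a :: rs₂ = rs₁ ++ [a] ++ rs₂ := by simp
    rcases List.mem_cons.mp hr with rfl | hr
    · intro hmem
      apply hne
      rw [ofList_append, eq_top_of_isSMulRegular_quotient_of_mem
        (isSMulRegular_quotient_ofList h) hmem, top_sup_eq]
    · have := ih (rs₁ := rs₁ ++ [a]) (hcons ▸ h) (hcons ▸ hne) hr
      rw [ofList_append] at this
      exact fun hmem => this (mem_sup_left hmem)

variable {d : ℕ} {x : Fin d → R}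

theorem ofList_map_filter (x : Fin d → R) (p : Fin d → Bool) :
    ofList (((List.finRange d).filter p).map x) = span (x '' {i | p i}) := by
  refine congrArg span (Set.ext fun r => ?_)
  simp

theorem ofList_filter_append (x : Fin d → R) (p : Fin d → Bool) :
    ofList (((List.finRange d).filter p).map x ++ ((List.finRange d).filter (!p ·)).map x) =
      span (Set.range x) := by
  rw [ofList_append, ofList_map_filter, ofList_map_filter, ← span_union, ← Set.image_union,
    ← Set.image_univ]
  congr 2
  ext i
  simp

theorem isWeaklyRegular_filter_append [IsNoetherianRing R]
    (hreg : IsWeaklyRegular R (List.ofFn x)) (hjac : ∀ i, x i ∈ jacobson (⊥ : Ideal R))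
    (p : Fin d → Bool) :
    IsWeaklyRegular R
      (((List.finRange d).filter p).map x ++ ((List.finRange d).filter (!p ·)).map x) := by
  rw [← List.map_append]
  refine hreg.of_perm_of_subset_jacobson_annihilator ?_ ?_
  · rw [List.ofFn_eq_map]
    exact (List.filter_append_perm p _).symm.map x
  · simpa [Module.annihilator_eq_bot.mpr inferInstance] using hjac

theorem isPrime_span_image [IsNoetherianRing R] (hreg : IsWeaklyRegular R (List.ofFn x))
    (hjac : ∀ i, x i ∈ jacobson (⊥ : Ideal R)) (hprime : (span (Set.range x)).IsPrime)
    (S : Finset (Fin d)) : (span (x '' S)).IsPrime := by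
  have h := isPrime_ofList_of_isWeaklyRegular_append
    (isWeaklyRegular_filter_append hreg hjac (· ∈ S)) (by simp [hjac])
    (ofList_filter_append x _ ▸ hprime)
  simpa [ofList_map_filter] using h

theorem notMem_span_image [IsNoetherianRing R] (hreg : IsWeaklyRegular R (List.ofFn x))
    (hjac : ∀ i, x i ∈ jacobson (⊥ : Ideal R)) (hprime : (span (Set.range x)).IsPrime)
    {S : Finset (Fin d)} {j : Fin d} (hj : j ∉ S) : x j ∉ span (x '' S) := by
  have h := notMem_ofList_of_isWeaklyRegular_append
    (isWeaklyRegular_filter_append hreg hjac (· ∈ S)) (ofList_filter_append x _ ▸ hprime.ne_top)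
    (r := x j) (by simpa using ⟨j, hj, rfl⟩)
  simpa [ofList_map_filter] using h

end RegularSequence

section MonomialIdeal

variable {R : Type*} [CommRing R] {ι : Type*}

def IsVertexCover (T : Set (Finset ι)) (G : Finset ι) : Prop :=
  ∀ s ∈ T, ∃ i ∈ s, i ∈ G

def monomialIdeal (x : ι → R) (T : Set (Finset ι)) : Ideal R :=
  span ((fun s => ∏ i ∈ s, x i) '' T)

variable {x : ι → R} {T : Set (Finset ι)}

theorem IsVertexCover.insert_of_filter [DecidableEq ι] {G : Finset ι} {j : ι}
    (h : IsVertexCover {s ∈ T | j ∉ s} G) : IsVertexCover T (insert j G) := by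
  intro s hs
  by_cases hjs : j ∈ s
  · exact ⟨j, hjs, Finset.mem_insert_self j G⟩
  · obtain ⟨i, his, hiG⟩ := h s ⟨hs, hjs⟩
    exact ⟨i, his, Finset.mem_insert_of_mem hiG⟩

theorem IsVertexCover.of_image_erase [DecidableEq ι] {G : Finset ι} {j : ι}
    (h : IsVertexCover ((·.erase j) '' T) G) : IsVertexCover T G := by
  intro s hs
  obtain ⟨i, hi, hiG⟩ := h _ ⟨s, hs, rfl⟩
  exact ⟨i, Finset.mem_of_mem_erase hi, hiG⟩

theorem monomialIdeal_mono {T' : Set (Finset ι)} (h : T ⊆ T') :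
    monomialIdeal x T ≤ monomialIdeal x T' :=
  span_mono (Set.image_mono h)

theorem monomialIdeal_le_span_image {G : Finset ι} (h : IsVertexCover T G) :
    monomialIdeal x T ≤ span (x '' G) := by
  rw [monomialIdeal, span_le]
  rintro _ ⟨s, hs, rfl⟩
  obtain ⟨i, his, hiG⟩ := h s hs
  exact mem_of_dvd _ (Finset.dvd_prod_of_mem x his) (subset_span ⟨i, hiG, rfl⟩)

theorem monomialIdeal_image_erase_sup_le_colon [DecidableEq ι] (J : Ideal R) (j : ι) :
    monomialIdeal x ((·.erase j) '' T) ⊔ J ≤ (monomialIdeal x T ⊔ J).colon {x j} := by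
  refine sup_le ?_ (le_sup_right.trans le_colon)
  rw [monomialIdeal, span_le]
  rintro _ ⟨_, ⟨s, hs, rfl⟩, rfl⟩
  rw [SetLike.mem_coe, Submodule.mem_colon_singleton, smul_eq_mul]
  refine mem_sup_left ?_
  dsimp only
  by_cases hjs : j ∈ s
  · rw [mul_comm, Finset.mul_prod_erase s x hjs]
    exact subset_span ⟨s, hs, rfl⟩
  · rw [Finset.erase_eq_of_notMem hjs]
    exact mul_mem_right _ _ (subset_span ⟨s, hs, rfl⟩)

-- Induction on `D`, splitting off one variable `x j` at a time. The ideal `P_E` stands in for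
-- the quotient by the variables already split off, so that the induction never leaves `R`.
theorem mem_monomialIdeal_sup_of_forall_isVertexCover [DecidableEq ι]
    (hP : ∀ S : Finset ι, (span (x '' S)).IsPrime)
    (hX : ∀ (S : Finset ι) (j : ι), j ∉ S → x j ∉ span (x '' S))
    {D E : Finset ι} {y : R} (hDE : Disjoint D E) (hT : ∀ s ∈ T, s ⊆ D)
    (hy : ∀ G ⊆ D, IsVertexCover T G → y ∈ span (x '' ↑(E ∪ G))) :
    y ∈ monomialIdeal x T ⊔ span (x '' E) := by
  induction D using Finset.induction_on generalizing E T y with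
  | empty =>
    by_cases h0 : ∅ ∈ T
    · have : monomialIdeal x T = ⊤ := (eq_top_iff_one _).mpr (subset_span ⟨∅, h0, by simp⟩)
      simp [this]
    · have hcov : IsVertexCover T ∅ := fun s hs =>
        absurd (Finset.subset_empty.mp (hT s hs) ▸ hs) h0
      exact mem_sup_right (by simpa using hy ∅ subset_rfl hcov)
  | insert j D hjD ih =>
    have hjE : j ∉ E := Finset.disjoint_left.mp hDE (Finset.mem_insert_self j D)
    have hDE' : Disjoint D E := Finset.disjoint_of_subset_left (Finset.subset_insert j D) hDE
    have hy₀ : y ∈ monomialIdeal x {s ∈ T | j ∉ s} ⊔ span (x '' ↑(insert j E)) := by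
      refine ih (Finset.disjoint_insert_right.mpr ⟨hjD, hDE'⟩)
        (fun s hs => (Finset.subset_insert_iff_of_notMem hs.2).mp (hT s hs.1)) fun G hG hcov => ?_
      simpa [Finset.union_insert, Finset.insert_union] using
        hy _ (Finset.insert_subset_insert j hG) hcov.insert_of_filter
    rw [Finset.coe_insert, Set.image_insert_eq, span_insert, ← sup_assoc, sup_right_comm] at hy₀
    obtain ⟨a, ha, c, hc, rfl⟩ := Submodule.mem_sup.mp hy₀
    obtain ⟨b, rfl⟩ := mem_span_singleton'.mp hc
    have hT₀ : monomialIdeal x {s ∈ T | j ∉ s} ≤ monomialIdeal x T :=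
      monomialIdeal_mono fun s hs => hs.1
    replace ha : a ∈ monomialIdeal x T ⊔ span (x '' E) := sup_le_sup_right hT₀ _ ha
    have hb : b ∈ monomialIdeal x ((·.erase j) '' T) ⊔ span (x '' E) := by
      refine ih hDE' (by rintro _ ⟨s, hs, rfl⟩; exact Finset.subset_insert_iff.mp (hT s hs))
        fun G hG hcov => ?_
      have hle : monomialIdeal x T ⊔ span (x '' E) ≤ span (x '' ↑(E ∪ G)) :=
        sup_le ((monomialIdeal_le_span_image hcov.of_image_erase).trans
          (span_mono (Set.image_mono (by simp)))) (span_mono (Set.image_mono (by simp)))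
      have hbx : b * x j ∈ span (x '' ↑(E ∪ G)) := by
        simpa using sub_mem (hy G (hG.trans (Finset.subset_insert j D)) hcov.of_image_erase)
          (hle ha)
      refine ((hP _).mem_or_mem hbx).resolve_right (hX _ j ?_)
      simpa [not_or] using ⟨hjE, fun h => hjD (hG h)⟩
    exact add_mem ha
      (Submodule.mem_colon_singleton.mp (monomialIdeal_image_erase_sup_le_colon _ j hb))

theorem mem_monomialIdeal_of_forall_minimal [Fintype ι] [DecidableEq ι]
    (hP : ∀ S : Finset ι, (span (x '' S)).IsPrime)
    (hX : ∀ (S : Finset ι) (j : ι), j ∉ S → x j ∉ span (x '' S)) {y : R}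
    (hy : ∀ F, Minimal (IsVertexCover T) F → y ∈ span (x '' F)) : y ∈ monomialIdeal x T := by
  have h := mem_monomialIdeal_sup_of_forall_isVertexCover hP hX
    (Finset.disjoint_empty_right Finset.univ) (fun s _ => Finset.subset_univ s) fun G _ hG => by
      obtain ⟨F, hFG, hF⟩ := exists_minimal_le_of_wellFoundedLT _ G hG
      simpa using span_mono (Set.image_mono (Finset.coe_subset.mpr hFG)) (hy F hF)
  simpa using h

theorem exists_minimal_isVertexCover_span_le [Fintype ι] {q : Ideal R} (hq : q.IsPrime)
    (hTq : monomialIdeal x T ≤ q) : ∃ F, Minimal (IsVertexCover T) F ∧ span (x '' F) ≤ q := by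
  classical
  have hcov : IsVertexCover T {i | x i ∈ q} := fun s hs => by
    simpa using hq.prod_mem_iff.mp (hTq (subset_span ⟨s, hs, rfl⟩))
  obtain ⟨F, hFG, hF⟩ := exists_minimal_le_of_wellFoundedLT _ _ hcov
  refine ⟨F, hF, span_le.mpr ?_⟩
  rintro _ ⟨i, hi, rfl⟩
  simpa using hFG hi

theorem subset_of_span_image_le (hX : ∀ (S : Finset ι) (j : ι), j ∉ S → x j ∉ span (x '' S))
    {F G : Finset ι} (h : span (x '' F) ≤ span (x '' G)) : F ⊆ G :=
  fun i hi => by_contra fun hiG => hX G i hiG (h (subset_span ⟨i, hi, rfl⟩))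

theorem span_image_mem_minimalPrimes [Fintype ι]
    (hP : ∀ S : Finset ι, (span (x '' S)).IsPrime)
    (hX : ∀ (S : Finset ι) (j : ι), j ∉ S → x j ∉ span (x '' S))
    {F : Finset ι} (hF : Minimal (IsVertexCover T) F) :
    span (x '' F) ∈ (monomialIdeal x T).minimalPrimes := by
  refine ⟨⟨hP F, monomialIdeal_le_span_image hF.prop⟩, fun q ⟨hq, hTq⟩ hqF => ?_⟩
  obtain ⟨F', hF', hF'q⟩ := exists_minimal_isVertexCover_span_le hq hTq
  have hF'F : F' ⊆ F := subset_of_span_image_le hX (hF'q.trans hqF)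
  exact (hF.eq_of_le hF'.prop hF'F ▸ hF'q : span (x '' F) ≤ q)

end MonomialIdeal

section AssociatedPrimes

variable {R : Type*} [CommRing R]

theorem Ideal.mem_colon_mk_iff {J : Ideal R} {a w : R} :
    a ∈ (⊥ : Submodule R (R ⧸ J)).colon {Ideal.Quotient.mk J w} ↔ a * w ∈ J := by
  rw [Submodule.mem_colon_singleton, Algebra.smul_def, Ideal.Quotient.algebraMap_eq, ← map_mul,
    Submodule.mem_bot, Ideal.Quotient.eq_zero_iff_mem]

theorem exists_mem_iff_mul_mem_of_mem_associatedPrimes [IsNoetherianRing R] {J P : Ideal R}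
    (hP : P ∈ associatedPrimes R (R ⧸ J)) : P.IsPrime ∧ ∃ w ∉ J, ∀ a, a ∈ P ↔ a * w ∈ J := by
  obtain ⟨hPp, w, hw⟩ := isAssociatedPrime_iff.mp hP
  obtain ⟨w, rfl⟩ := Ideal.Quotient.mk_surjective w
  have hmem : ∀ a, a ∈ P ↔ a * w ∈ J := fun a => hw ▸ Ideal.mem_colon_mk_iff
  refine ⟨hPp, w, fun hwJ => hPp.ne_top ((eq_top_iff_one _).mpr ?_), hmem⟩
  exact (hmem 1).mpr (by rwa [one_mul])

theorem exists_mem_forall_notMem_minimalPrimes [IsNoetherianRing R] {I P : Ideal R}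
    (hPp : P.IsPrime) (hIP : I ≤ P) (hP : P ∉ I.minimalPrimes) :
    ∃ a ∈ P, ∀ q ∈ I.minimalPrimes, a ∉ q := by
  have hnle : ¬ (P : Set R) ⊆ ⋃ q ∈ I.minimalPrimes, (q : Set R) := by
    rw [subset_union_prime_finite I.finite_minimalPrimes_of_isNoetherianRing P P
      fun q hq _ _ => hq.1.1]
    rintro ⟨q, hq, hPq⟩
    exact hP (le_antisymm hPq (hq.2 ⟨hPp, hIP⟩ hPq) ▸ hq)
  obtain ⟨a, haP, ha⟩ := Set.not_subset.mp hnle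
  exact ⟨a, haP, fun q hq haq => ha (Set.mem_biUnion hq haq)⟩

theorem saturation_eq_iff_associatedPrimes_subset_minimalPrimes [IsNoetherianRing R]
    {I J : Ideal R} (hIJ : I ≤ J.radical) :
    {y : R | ∃ s : R, (∀ p ∈ I.minimalPrimes, s ∉ p) ∧ s * y ∈ J} = (J : Set R) ↔
      associatedPrimes R (R ⧸ J) ⊆ I.minimalPrimes := by
  constructor
  · intro hsat P hP
    obtain ⟨hPp, w, hwJ, hmem⟩ := exists_mem_iff_mul_mem_of_mem_associatedPrimes hP
    have hIP : I ≤ P :=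
      hIJ.trans (hPp.radical_le_iff.mpr fun a ha => (hmem a).mpr (mul_mem_right _ _ ha))
    by_contra hPmin
    obtain ⟨a, haP, ha⟩ := exists_mem_forall_notMem_minimalPrimes hPp hIP hPmin
    exact hwJ (hsat ▸ ⟨a, ha, (hmem a).mp haP⟩ : w ∈ (J : Set R))
  · intro hAss
    refine Set.Subset.antisymm (fun y ⟨s, hs, hsy⟩ => ?_) fun y hy =>
      ⟨1, fun p hp h1 => hp.1.1.ne_top ((eq_top_iff_one _).mpr h1), by rwa [one_mul]⟩
    by_contra hyJ
    obtain ⟨P, hP, hyP⟩ := exists_le_isAssociatedPrime_of_isNoetherianRing R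
      (Ideal.Quotient.mk J y) (by rwa [Ne, Ideal.Quotient.eq_zero_iff_mem])
    exact hs P (hAss hP) (hyP (Ideal.mem_colon_mk_iff.mpr hsy))

theorem associatedPrimes_monomialIdeal {ι : Type*} [Fintype ι] [DecidableEq ι]
    [IsNoetherianRing R] {x : ι → R} {T : Set (Finset ι)}
    (hP : ∀ S : Finset ι, (span (x '' S)).IsPrime)
    (hX : ∀ (S : Finset ι) (j : ι), j ∉ S → x j ∉ span (x '' S)) :
    associatedPrimes R (R ⧸ monomialIdeal x T) = (monomialIdeal x T).minimalPrimes := by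
  refine subset_antisymm (fun p hp => ?_) ?_
  · obtain ⟨hpp, w, hwT, hmem⟩ := exists_mem_iff_mul_mem_of_mem_associatedPrimes hp
    obtain ⟨F, hF, hwF⟩ : ∃ F, Minimal (IsVertexCover T) F ∧ w ∉ span (x '' F) := by
      by_contra! h
      exact hwT (mem_monomialIdeal_of_forall_minimal hP hX h)
    have hpF : p ≤ span (x '' F) := fun a ha =>
      ((hP F).mem_or_mem (monomialIdeal_le_span_image hF.prop ((hmem a).mp ha))).resolve_right hwF
    have hFmin := span_image_mem_minimalPrimes hP hX hF
    have hTp : monomialIdeal x T ≤ p := fun a ha => (hmem a).mpr (mul_mem_right _ _ ha)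
    exact le_antisymm hpF (hFmin.2 ⟨hpp, hTp⟩ hpF) ▸ hFmin
  · simpa [Ideal.annihilator_quotient] using
      Module.associatedPrimes.minimalPrimes_annihilator_subset_associatedPrimes R
        (R ⧸ monomialIdeal x T)

end AssociatedPrimes

theorem stmt_14_general {R : Type*} [CommRing R] [IsNoetherianRing R] {d : ℕ} (x : Fin d → R)
    (hreg : RingTheory.Sequence.IsRegular R (List.ofFn x))
    (hjac : ∀ i, x i ∈ Ideal.jacobson (⊥ : Ideal R))
    (hprime : (Ideal.span (Set.range x)).IsPrime)
    (I : Ideal R)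
    (hsf : ∃ T : Set (Finset (Fin d)), I = Ideal.span ((fun s => ∏ i ∈ s, x i) '' T))
    (k : ℕ) :
    {y : R | ∃ s : R, (∀ p ∈ I.minimalPrimes, s ∉ p) ∧ s * y ∈ I ^ k} =
        ((I ^ k : Ideal R) : Set R) ↔
      associatedPrimes R (R ⧸ I ^ k) ⊆ associatedPrimes R (R ⧸ I) := by
  obtain ⟨T, rfl⟩ := hsf
  have hAss : associatedPrimes R (R ⧸ monomialIdeal x T) = (monomialIdeal x T).minimalPrimes :=
    associatedPrimes_monomialIdeal (isPrime_span_image hreg.toIsWeaklyRegular hjac hprime)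
      fun S j hj => notMem_span_image hreg.toIsWeaklyRegular hjac hprime hj
  rw [monomialIdeal] at hAss
  rw [hAss]
  exact saturation_eq_iff_associatedPrimes_subset_minimalPrimes fun a ha => ⟨k, pow_mem_pow ha k⟩

theorem stmt_14 {R : Type*} [CommRing R] [IsNoetherianRing R] {d : ℕ} (x : Fin d → R)
    (hreg : RingTheory.Sequence.IsRegular R (List.ofFn x))
    (hjac : ∀ i, x i ∈ Ideal.jacobson (⊥ : Ideal R))
    (hprime : (Ideal.span (Set.range x)).IsPrime)
    (I : Ideal R) (hIproper : I ≠ ⊤)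
    (hsf : ∃ T : Set (Finset (Fin d)), I = Ideal.span ((fun s => ∏ i ∈ s, x i) '' T))
    (k : ℕ) (hk : 1 ≤ k) :
    {y : R | ∃ s : R, (∀ p ∈ I.minimalPrimes, s ∉ p) ∧ s * y ∈ I ^ k} =
        ((I ^ k : Ideal R) : Set R) ↔
      associatedPrimes R (R ⧸ I ^ k) ⊆ associatedPrimes R (R ⧸ I) :=
  stmt_14_general x hreg hjac hprime I hsf k
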